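/- arXiv:1106.0482 — 3 statements merged into one kernel-verified Lean document; each statement's English description precedes it below -/
import Mathlib

section
/- Let G be a Lie group with Lie algebra 𝔤, H a closed subgroup with Lie algebra 𝔥, and g ∈ G. If xH is a fixed point of l_{g⁻¹} : G/H → G/H and h ∈ h(g,xH) is an element of the associated conjugacy class in H, then det(1 − d(l_{g⁻¹})_{xH}) = det(1 − Ad^G_H(h)), where Ad^G_H : H → Aut(𝔤/𝔥) is the isotropy action of H on 𝔤/𝔥 induced by the adjoint representation. -/
/-!
Since `g⁻¹ x = x h`, the translation `l_{g⁻¹} = l_x ∘ l_h ∘ l_{x⁻¹}` is conjugate to `l_h`, and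
`l_x` carries the base point `eK` (fixed by `l_h`) to `xK`. By the chain rule
`d(l_{g⁻¹})_{xK}` is the conjugate of `d(l_h)_{eK}` by `d(l_x)_{eK}`, whose inverse is
`d(l_{x⁻¹})_{xK}`, and `det (1 - ·)` is invariant under conjugation.
-/

section Determinant

variable {R M : Type*} [CommRing R] [AddCommGroup M] [Module R M]

theorem LinearMap.det_comp_comp_of_comp_eq_id {c c' : M →ₗ[R] M} (h : c ∘ₗ c' = id)
    (f : M →ₗ[R] M) : LinearMap.det (c ∘ₗ f ∘ₗ c') = LinearMap.det f := by
  rw [det_comp, det_comp, mul_left_comm, ← det_comp, h, det_id, mul_one]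

theorem LinearMap.det_id_sub_comp_comp_of_comp_eq_id {c c' : M →ₗ[R] M} (h : c ∘ₗ c' = id)
    (f : M →ₗ[R] M) : LinearMap.det (id - c ∘ₗ f ∘ₗ c') = LinearMap.det (id - f) := by
  have : id - c ∘ₗ f ∘ₗ c' = c ∘ₗ (id - f) ∘ₗ c' := by
    rw [sub_comp, comp_sub, id_comp, h]
  rw [this, det_comp_comp_of_comp_eq_id h]

end Determinant

section SMulTranslation

variable {𝕜 : Type*} [NontriviallyNormedField 𝕜]
  {F : Type*} [NormedAddCommGroup F] [NormedSpace 𝕜 F]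
  {HF : Type*} [TopologicalSpace HF] {J : ModelWithCorners 𝕜 F HF}
  {M : Type*} [TopologicalSpace M] [ChartedSpace HF M]
  {G : Type*} [Group G] [MulAction G M]

theorem mfderiv_one_smul (p : M) :
    (mfderiv J J (fun r : M => (1 : G) • r) p : F →L[𝕜] F) = ContinuousLinearMap.id 𝕜 F := by
  have : (fun r : M => (1 : G) • r) = id := funext (one_smul G)
  rw [this]
  exact mfderiv_id

theorem mfderiv_smul_of_mul_eq (hsmul : ∀ a : G, MDifferentiable J J (fun p : M => a • p))
    {a b c : G} (hc : a * b = c) {p q : M} (hq : b • p = q) :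
    (mfderiv J J (fun r : M => c • r) p : F →L[𝕜] F) =
      (mfderiv J J (fun r : M => a • r) q : F →L[𝕜] F).comp
        (mfderiv J J (fun r : M => b • r) p) := by
  subst hc hq
  have : (fun r : M => (a * b) • r) = (fun r => a • r) ∘ (fun r => b • r) :=
    funext fun r => mul_smul a b r
  rw [this]
  exact mfderiv_comp p (hsmul a _) (hsmul b _)

theorem mfderiv_smul_comp_mfderiv_inv_smul
    (hsmul : ∀ a : G, MDifferentiable J J (fun p : M => a • p)) (a : G) (p : M) :
    (mfderiv J J (fun r : M => a • r) p : F →L[𝕜] F).comp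
        (mfderiv J J (fun r : M => a⁻¹ • r) (a • p)) = ContinuousLinearMap.id 𝕜 F := by
  rw [← mfderiv_smul_of_mul_eq hsmul (mul_inv_cancel a) (inv_smul_smul a p)]
  exact mfderiv_one_smul (a • p)

theorem det_id_sub_mfderiv_conj_smul (hsmul : ∀ a : G, MDifferentiable J J (fun p : M => a • p))
    {a b : G} {p : M} (hp : b • p = p) :
    LinearMap.det ((ContinuousLinearMap.id 𝕜 F) -
        (show F →L[𝕜] F from mfderiv J J (fun r : M => (a * b * a⁻¹) • r) (a • p))).toLinearMap =
      LinearMap.det ((ContinuousLinearMap.id 𝕜 F) -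
        (show F →L[𝕜] F from mfderiv J J (fun r : M => b • r) p)).toLinearMap := by
  have hba : (b * a⁻¹) • a • p = p := by rw [mul_smul, inv_smul_smul, hp]
  have hconj : (mfderiv J J (fun r : M => (a * b * a⁻¹) • r) (a • p) : F →L[𝕜] F) =
      (mfderiv J J (fun r : M => a • r) p : F →L[𝕜] F).comp
        ((mfderiv J J (fun r : M => b • r) p : F →L[𝕜] F).comp
          (mfderiv J J (fun r : M => a⁻¹ • r) (a • p))) := by
    rw [mfderiv_smul_of_mul_eq hsmul (mul_assoc a b a⁻¹).symm hba,
      mfderiv_smul_of_mul_eq hsmul rfl (inv_smul_smul a p)]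
  simp only [hconj]
  exact LinearMap.det_id_sub_comp_comp_of_comp_eq_id
    (congrArg ContinuousLinearMap.toLinearMap (mfderiv_smul_comp_mfderiv_inv_smul hsmul a p)) _

end SMulTranslation

theorem det_one_sub_differential_eq_det_one_sub_isotropy_general
    {E : Type*} [NormedAddCommGroup E] [NormedSpace ℝ E]
    {HE : Type*} [TopologicalSpace HE] (I : ModelWithCorners ℝ E HE)
    {F : Type*} [NormedAddCommGroup F] [NormedSpace ℝ F]
    {HF : Type*} [TopologicalSpace HF] (J : ModelWithCorners ℝ F HF)
    {G : Type*} [Group G] [TopologicalSpace G] [ChartedSpace HE G]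
    (K : Subgroup G)
    [ChartedSpace HF (G ⧸ K)]
    (hsmooth : ContMDiff (I.prod J) J (⊤ : ℕ∞) (fun p : G × (G ⧸ K) => p.1 • p.2))
    (g x h : G) (hh : h ∈ K) (hfix : g⁻¹ * x = x * h) :
    LinearMap.det ((ContinuousLinearMap.id ℝ F) -
        (show F →L[ℝ] F from
          mfderiv J J (fun q : G ⧸ K => g⁻¹ • q) ((x : G ⧸ K)))).toLinearMap =
      LinearMap.det ((ContinuousLinearMap.id ℝ F) -
        (show F →L[ℝ] F from
          mfderiv J J (fun q : G ⧸ K => h • q) (((1 : G) : G ⧸ K)))).toLinearMap := by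
  have hsmul (a : G) : MDifferentiable J J (fun q : G ⧸ K => a • q) :=
    (hsmooth.comp (contMDiff_const.prodMk contMDiff_id)).mdifferentiable (by simp)
  have hg : g⁻¹ = x * h * x⁻¹ := by rw [← hfix]; group
  have hx : ((x : G) : G ⧸ K) = x • ((1 : G) : G ⧸ K) := by simp
  have hbase : h • ((1 : G) : G ⧸ K) = (1 : G) := by
    simpa using QuotientGroup.mk_mul_of_mem (1 : G) hh
  rw [hg, hx]
  exact det_id_sub_mfderiv_conj_smul hsmul hbase

/-- Let `G` be a Lie group, `H` a closed subgroup (with `G/H` a smooth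
manifold on which `G` acts smoothly), and `g ∈ G`. If `xH` is a fixed point of
`l_{g⁻¹} : G/H → G/H` and `h` is an element of the associated conjugacy class in `H`
(i.e. `g⁻¹x = xh`), then `det(1 - d(l_{g⁻¹})_{xH}) = det(1 - Ad^G_H(h))`, where the
isotropy action `Ad^G_H(h)` of `H` on `𝔤/𝔥 ≅ T_{eH}(G/H)` is realized as the
differential `d(l_h)_{eH}` of the left translation by `h` at the base point. -/
theorem det_one_sub_differential_eq_det_one_sub_isotropy
    {E : Type*} [NormedAddCommGroup E] [NormedSpace ℝ E]
    {HE : Type*} [TopologicalSpace HE] (I : ModelWithCorners ℝ E HE)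
    {F : Type*} [NormedAddCommGroup F] [NormedSpace ℝ F]
    {HF : Type*} [TopologicalSpace HF] (J : ModelWithCorners ℝ F HF)
    {G : Type*} [Group G] [TopologicalSpace G] [ChartedSpace HE G] [LieGroup I (⊤ : ℕ∞) G]
    (K : Subgroup G) (hclosed : IsClosed (K : Set G))
    [ChartedSpace HF (G ⧸ K)] [IsManifold J (⊤ : ℕ∞) (G ⧸ K)]
    (hsmooth : ContMDiff (I.prod J) J (⊤ : ℕ∞) (fun p : G × (G ⧸ K) => p.1 • p.2))
    (g x h : G) (hh : h ∈ K) (hfix : g⁻¹ * x = x * h) :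
    LinearMap.det ((ContinuousLinearMap.id ℝ F) -
        (show F →L[ℝ] F from
          mfderiv J J (fun q : G ⧸ K => g⁻¹ • q) ((x : G ⧸ K)))).toLinearMap =
      LinearMap.det ((ContinuousLinearMap.id ℝ F) -
        (show F →L[ℝ] F from
          mfderiv J J (fun q : G ⧸ K => h • q) (((1 : G) : G ⧸ K)))).toLinearMap :=
  det_one_sub_differential_eq_det_one_sub_isotropy_general I J K hsmooth g x h hh hfix
end

section
/- For u ∈ C_c^∞(ℝ), the function F(s) = ∫_ℝ |x|^s u(x) dx, defined and holomorphic for Re s > −1, extends to a meromorphic function of s on ℂ with at most simple poles at s = −1, −3, −5, …; explicitly, for Re s > −1, F(s) = ∫_0^∞ x^s (u(x) + u(−x)) dx, and integration by parts yields the continuation F(s) = −(1/(s+1)) ∫_0^∞ x^{s+1} (u'(x) − u'(−x)) dx, which is holomorphic for Re s > −2 except for a possible simple pole at s = −1 with residue 2u(0). -/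
open MeasureTheory Complex Filter

section Aux

open Set Asymptotics

lemma aux_ev_zero {g : ℝ → ℂ} (hgs : HasCompactSupport g) :
    ∀ᶠ x : ℝ in atTop, g x = 0 := by
  obtain ⟨R, hR⟩ := hgs.isCompact.isBounded.subset_closedBall 0
  filter_upwards [Filter.eventually_gt_atTop R] with x hx
  by_contra h
  have hx' : x ∈ Metric.closedBall (0 : ℝ) R := hR (subset_tsupport g h)
  rw [Metric.mem_closedBall, Real.dist_eq, sub_zero] at hx'
  exact absurd ((le_abs_self x).trans hx') (not_le.mpr hx)

lemma aux_bigO_top {g : ℝ → ℂ} (hgs : HasCompactSupport g) (a : ℝ) :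
    g =O[atTop] (fun t : ℝ => t ^ (-a)) := by
  have h : g =ᶠ[atTop] (fun _ => (0 : ℂ)) := aux_ev_zero hgs
  exact (isBigO_zero _ _).congr' h.symm EventuallyEq.rfl

lemma aux_bigO_zero {g : ℝ → ℂ} (hg : Continuous g) :
    g =O[nhdsWithin 0 (Set.Ioi 0)] (fun t : ℝ => t ^ (-(0:ℝ))) := by
  have h : Tendsto g (nhdsWithin 0 (Set.Ioi 0)) (nhds (g 0)) :=
    (hg.tendsto 0).mono_left nhdsWithin_le_nhds
  refine (h.isBigO_one ℝ).trans (isBigO_of_le _ fun x => ?_)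
  simp [Real.rpow_zero]

lemma aux_mellinConv {g : ℝ → ℂ} (hg : Continuous g) (hgs : HasCompactSupport g)
    {z : ℂ} (hz : 0 < z.re) : MellinConvergent g z :=
  mellinConvergent_of_isBigO_rpow (hg.locallyIntegrable.locallyIntegrableOn _)
    (aux_bigO_top hgs (z.re + 1)) (by linarith) (aux_bigO_zero hg) hz

lemma aux_mellinDiff {g : ℝ → ℂ} (hg : Continuous g) (hgs : HasCompactSupport g)
    {z : ℂ} (hz : 0 < z.re) : DifferentiableAt ℂ (mellin g) z :=
  mellin_differentiableAt_of_isBigO_rpow (hg.locallyIntegrable.locallyIntegrableOn _)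
    (aux_bigO_top hgs (z.re + 1)) (by linarith) (aux_bigO_zero hg) hz

lemma aux_intOn {g : ℝ → ℂ} (hg : Continuous g) (hgs : HasCompactSupport g)
    {z : ℂ} (hz : 0 < (z + 1).re) :
    IntegrableOn (fun x : ℝ => (x : ℂ) ^ z * g x) (Set.Ioi 0) := by
  have h := aux_mellinConv hg hgs hz
  rw [MellinConvergent] at h
  have : z + 1 - 1 = z := by ring
  rw [this] at h
  simpa [smul_eq_mul] using h

lemma aux_integrableOn_comp_neg {g : ℝ → ℂ} (hg : IntegrableOn g (Set.Ioi (0:ℝ))) :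
    IntegrableOn (fun x => g (-x)) (Set.Iio (0:ℝ)) := by
  have h_map : (volume.restrict (Set.Ioi (0:ℝ))).map Neg.neg
      = volume.restrict (Set.Iio (0:ℝ)) := by
    conv => rhs; rw [← Measure.map_neg_eq_self (volume : Measure ℝ),
      measurableEmbedding_neg.restrict_map]
    simp
  rw [IntegrableOn, ← h_map, measurableEmbedding_neg.integrable_map_iff]
  simpa [Function.comp_def, IntegrableOn] using hg

end Aux

/-- For `u ∈ C_c^∞(ℝ)`, `F(s) = ∫ |x|^s u(x) dx` (holomorphic for
`Re s > -1`) extends meromorphically with at most simple poles at `s = -1,-3,-5,…`: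
for `Re s > -1` one has `F(s) = ∫_0^∞ x^s (u(x)+u(-x)) dx`, integration by parts gives
`F(s) = -(s+1)⁻¹ ∫_0^∞ x^{s+1} (u'(x)-u'(-x)) dx`, and the latter integral is holomorphic
for `Re s > -2`, so the continuation has at most a simple pole at `s = -1` with residue
`2u(0)`. -/
theorem meromorphic_continuation_abs_pow
    (u : ℝ → ℂ) (hu : ContDiff ℝ (⊤ : ℕ∞) u) (hsupp : HasCompactSupport u)
    (F G : ℂ → ℂ)
    (hF : ∀ s : ℂ, F s = ∫ x : ℝ, (if x = 0 then 0 else ((|x| : ℝ) : ℂ) ^ s) * u x)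
    (hG : ∀ s : ℂ, G s = ∫ x in Set.Ioi (0 : ℝ), (x : ℂ) ^ (s + 1) *
        (deriv u x - deriv u (-x))) :
    (∀ s : ℂ, -1 < s.re →
        F s = ∫ x in Set.Ioi (0 : ℝ), (x : ℂ) ^ s * (u x + u (-x))) ∧
      (∀ s : ℂ, -1 < s.re → F s = -(s + 1)⁻¹ * G s) ∧
      DifferentiableOn ℂ G {s : ℂ | -2 < s.re} ∧
      Tendsto (fun s : ℂ => (s + 1) * (-(s + 1)⁻¹ * G s))
        (nhdsWithin (-1) {(-1)}ᶜ) (nhds (2 * u 0)) := by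
  set v : ℝ → ℂ := fun x => u x + u (-x) with hv_def
  set w : ℝ → ℂ := fun x => deriv u x - deriv u (-x) with hw_def
  have hucont : Continuous u := hu.continuous
  have hud : Differentiable ℝ u := hu.differentiable (by simp)
  have hu' : Continuous (deriv u) := hu.continuous_deriv (by simp)
  have hun : Continuous (fun x : ℝ => u (-x)) := hucont.comp continuous_neg
  have hv : Continuous v := hucont.add hun
  have hw : Continuous w := hu'.sub (hu'.comp continuous_neg)
  have huns : HasCompactSupport (fun x : ℝ => u (-x)) :=
    hsupp.comp_homeomorph (Homeomorph.neg ℝ)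
  have hvs : HasCompactSupport v := hsupp.add huns
  have hws : HasCompactSupport w := by
    rw [hw_def]
    simp only [sub_eq_add_neg]
    exact hsupp.deriv.add
      ((hsupp.deriv.comp_homeomorph (Homeomorph.neg ℝ)).comp_left (g := Neg.neg) neg_zero)
  -- derivative of v
  have hdv : ∀ x : ℝ, HasDerivAt v (w x) x := by
    intro x
    have h1 : HasDerivAt u (deriv u x) x := (hud x).hasDerivAt
    have h2 : HasDerivAt (fun y : ℝ => u (-y)) ((-1 : ℝ) • deriv u (-x)) x :=
      (hud (-x)).hasDerivAt.scomp x (hasDerivAt_neg x)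
    have h3 : HasDerivAt (fun y : ℝ => u y + u (-y))
        (deriv u x + (-1 : ℝ) • deriv u (-x)) x := h1.add h2
    have h4 : deriv u x + (-1 : ℝ) • deriv u (-x) = w x := by
      simp [hw_def, sub_eq_add_neg]
    exact h4 ▸ h3
  -- Part 1
  have key1 : ∀ s : ℂ, -1 < s.re →
      F s = ∫ x in Set.Ioi (0 : ℝ), (x : ℂ) ^ s * (u x + u (-x)) := by
    intro s hs
    have hs1 : (0:ℝ) < (s + 1).re := by
      simp only [Complex.add_re, Complex.one_re]; linarith
    have hIu : IntegrableOn (fun x : ℝ => (x:ℂ) ^ s * u x) (Set.Ioi 0) :=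
      aux_intOn hucont hsupp hs1
    have hIu' : IntegrableOn (fun x : ℝ => (x:ℂ) ^ s * u (-x)) (Set.Ioi 0) :=
      aux_intOn hun huns hs1
    set f : ℝ → ℂ := fun x => (if x = 0 then 0 else ((|x| : ℝ) : ℂ) ^ s) * u x with hf_def
    have hfIoi : Set.EqOn f (fun x : ℝ => (x:ℂ) ^ s * u x) (Set.Ioi 0) := by
      intro x hx
      have hx0 : x ≠ 0 := ne_of_gt hx
      simp [hf_def, hx0, abs_of_pos (Set.mem_Ioi.mp hx)]
    have hfIio : Set.EqOn f (fun x : ℝ => ((-x : ℝ) : ℂ) ^ s * u x) (Set.Iio 0) := by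
      intro x hx
      have hx0 : x < 0 := hx
      simp only [hf_def]
      rw [if_neg (ne_of_lt hx0), abs_of_neg hx0]
    have hintIoi : IntegrableOn f (Set.Ioi 0) :=
      hIu.congr_fun hfIoi.symm measurableSet_Ioi
    have hIun : IntegrableOn (fun x : ℝ => ((-x : ℝ) : ℂ) ^ s * u x) (Set.Iio 0) := by
      have h := aux_integrableOn_comp_neg hIu'
      simpa using h
    have hintIio : IntegrableOn f (Set.Iio 0) :=
      hIun.congr_fun hfIio.symm measurableSet_Iio
    have hsplit : (∫ x : ℝ, f x)
        = (∫ x in Set.Iio (0:ℝ), f x) + ∫ x in Set.Ioi (0:ℝ), f x := by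
      rw [← setIntegral_eq_integral_of_forall_compl_eq_zero
        (s := Set.Iio (0:ℝ) ∪ Set.Ioi 0) (fun x hx => ?_)]
      · exact setIntegral_union (Set.disjoint_left.mpr fun a ha hb =>
          absurd (Set.mem_Ioi.mp hb) (not_lt.mpr (le_of_lt (Set.mem_Iio.mp ha))))
          measurableSet_Ioi hintIio hintIoi
      · have hx0 : x = 0 := by
          simp only [Set.mem_union, Set.mem_Iio, Set.mem_Ioi, not_or, not_lt] at hx
          exact le_antisymm hx.2 hx.1
        simp [hf_def, hx0]
    have hIio : (∫ x in Set.Iio (0:ℝ), f x)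
        = ∫ x in Set.Ioi (0:ℝ), (x:ℂ) ^ s * u (-x) := by
      have h1 : (∫ x in Set.Iio (0:ℝ), f x) = ∫ x in Set.Iic (0:ℝ), f x :=
        (setIntegral_congr_set Iio_ae_eq_Iic)
      have h2 : (∫ x in Set.Iic (0:ℝ), (fun y : ℝ => f (-y)) (-x))
          = ∫ x in Set.Ioi (-(0:ℝ)), (fun y : ℝ => f (-y)) x :=
        integral_comp_neg_Iic (0:ℝ) (fun y : ℝ => f (-y))
      simp only [neg_neg, neg_zero] at h2
      rw [h1, h2]
      refine setIntegral_congr_fun measurableSet_Ioi (fun x hx => ?_)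
      have hx0 : (0:ℝ) < x := hx
      have hxne : -x ≠ 0 := by simpa using ne_of_gt hx0
      simp only [hf_def]
      rw [if_neg hxne, abs_of_neg (by linarith : -x < 0), neg_neg]
    rw [hF s, hsplit, hIio, setIntegral_congr_fun measurableSet_Ioi hfIoi,
      ← integral_add hIu' hIu]
    refine setIntegral_congr_fun measurableSet_Ioi (fun x hx => ?_)
    ring
  -- Part 2
  have key2 : ∀ s : ℂ, -1 < s.re → F s = -(s + 1)⁻¹ * G s := by
    intro s hs
    have hs1 : (0:ℝ) < (s + 1).re := by
      simp only [Complex.add_re, Complex.one_re]; linarith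
    have hsne : s + 1 ≠ 0 := by
      intro h; rw [h] at hs1; simp at hs1
    have hsne' : s ≠ -1 := by
      intro h; exact hsne (by rw [h]; ring)
    have hs2 : (0:ℝ) < (s + 1 + 1).re := by
      simp only [Complex.add_re, Complex.one_re]; linarith
    have hIv : IntegrableOn (fun x : ℝ => (x:ℂ) ^ s * v x) (Set.Ioi 0) :=
      aux_intOn hv hvs hs1
    have hIw : IntegrableOn (fun x : ℝ => (x:ℂ) ^ (s+1) * w x) (Set.Ioi 0) :=
      aux_intOn hw hws hs2
    set φ : ℝ → ℂ := fun x => (x:ℂ) ^ (s+1) * v x with hφ_def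
    have hderiv : ∀ x ∈ Set.Ioi (0:ℝ), HasDerivAt φ
        ((s+1) * ((x:ℂ) ^ s * v x) + (x:ℂ) ^ (s+1) * w x) x := by
      intro x hx
      have hx0 : x ≠ 0 := ne_of_gt hx
      have h1 : HasDerivAt (fun y : ℝ => (y:ℂ) ^ (s+1)) ((s+1) * (x:ℂ) ^ s) x := by
        have h := (hasDerivAt_ofReal_cpow_const' hx0 hsne').const_mul (s+1)
        have heq : (fun y : ℝ => (s+1) * ((y:ℂ) ^ (s+1) / (s+1)))
            = fun y : ℝ => (y:ℂ) ^ (s+1) := by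
          funext y; field_simp
        rw [heq] at h
        exact h
      have h2 := h1.mul (hdv x)
      have h3 : (s+1) * (x:ℂ) ^ s * v x + (x:ℂ) ^ (s+1) * w x
          = (s+1) * ((x:ℂ) ^ s * v x) + (x:ℂ) ^ (s+1) * w x := by ring
      exact h3 ▸ h2
    have hcont : ContinuousWithinAt φ (Set.Ici 0) 0 := by
      have : ContinuousAt φ 0 :=
        (continuousAt_ofReal_cpow_const 0 (s+1) (Or.inl hs1)).mul hv.continuousAt
      exact this.continuousWithinAt
    have htop : Tendsto φ atTop (nhds 0) := by
      have hev : φ =ᶠ[atTop] (fun _ => (0:ℂ)) := by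
        filter_upwards [aux_ev_zero hvs] with x hx
        simp [hφ_def, hx]
      exact Tendsto.congr' hev.symm tendsto_const_nhds
    have hint : IntegrableOn
        (fun x : ℝ => (s+1) * ((x:ℂ) ^ s * v x) + (x:ℂ) ^ (s+1) * w x)
        (Set.Ioi 0) := (hIv.const_mul (s+1)).add hIw
    have hFTC := integral_Ioi_of_hasDerivAt_of_tendsto hcont hderiv hint htop
    have hφ0 : φ 0 = 0 := by
      simp [hφ_def, Complex.zero_cpow hsne]
    rw [hφ0, sub_zero] at hFTC
    rw [integral_add (hIv.const_mul (s+1)) hIw, integral_const_mul] at hFTC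
    have hFv : F s = ∫ x in Set.Ioi (0:ℝ), (x:ℂ) ^ s * v x := key1 s hs
    have hGw : G s = ∫ x in Set.Ioi (0:ℝ), (x:ℂ) ^ (s+1) * w x := hG s
    rw [hFv, hGw]
    have h0 : (s + 1) * (∫ x in Set.Ioi (0:ℝ), (x:ℂ) ^ s * v x)
        = -(∫ x in Set.Ioi (0:ℝ), (x:ℂ) ^ (s+1) * w x) := by
      linear_combination hFTC
    calc (∫ x in Set.Ioi (0:ℝ), (x:ℂ) ^ s * v x)
        = (s+1)⁻¹ * ((s+1) * ∫ x in Set.Ioi (0:ℝ), (x:ℂ) ^ s * v x) := by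
          rw [← mul_assoc, inv_mul_cancel₀ hsne, one_mul]
      _ = (s+1)⁻¹ * -(∫ x in Set.Ioi (0:ℝ), (x:ℂ) ^ (s+1) * w x) := by rw [h0]
      _ = -(s+1)⁻¹ * ∫ x in Set.Ioi (0:ℝ), (x:ℂ) ^ (s+1) * w x := by ring
  -- Part 3
  have hGm : G = fun s => mellin w (s + 2) := by
    funext s
    rw [hG s, mellin]
    have h21 : s + 2 - 1 = s + 1 := by ring
    rw [h21]
    simp [smul_eq_mul, hw_def]
  have key3 : DifferentiableOn ℂ G {s : ℂ | -2 < s.re} := by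
    rw [hGm]
    intro z hz
    have hz' : (0:ℝ) < (z + 2).re := by
      have h2 : ((2:ℂ)).re = 2 := by norm_num
      have : -2 < z.re := hz
      rw [Complex.add_re, h2]
      linarith
    have hm : DifferentiableAt ℂ (mellin w) (z + 2) := aux_mellinDiff hw hws hz'
    have : DifferentiableAt ℂ (fun s : ℂ => mellin w (s + 2)) z :=
      DifferentiableAt.comp (g := mellin w) z hm ((differentiableAt_id (x := z)).add_const (2:ℂ))
    exact this.differentiableWithinAt
  -- Part 4
  have hIw0 : IntegrableOn w (Set.Ioi (0:ℝ)) :=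
    (hw.integrable_of_hasCompactSupport hws).integrableOn
  have hvtop : Tendsto v atTop (nhds 0) := by
    have hev : v =ᶠ[atTop] (fun _ => (0:ℂ)) := aux_ev_zero hvs
    exact Tendsto.congr' hev.symm tendsto_const_nhds
  have hG1 : G (-1) = -(2 * u 0) := by
    rw [hG (-1)]
    have h0 : (-1 : ℂ) + 1 = 0 := by ring
    have hcongr : (∫ x in Set.Ioi (0:ℝ), (x:ℂ) ^ ((-1:ℂ)+1) * (deriv u x - deriv u (-x)))
        = ∫ x in Set.Ioi (0:ℝ), w x := by
      refine setIntegral_congr_fun measurableSet_Ioi (fun x hx => ?_)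
      simp [h0, hw_def]
    rw [hcongr]
    have hFTC := integral_Ioi_of_hasDerivAt_of_tendsto
      (hv.continuousWithinAt) (fun x _ => hdv x) hIw0 hvtop
    have hv0 : v 0 = 2 * u 0 := by
      simp only [hv_def, neg_zero]
      ring
    rw [hFTC, hv0]
    ring
  have hGcont : ContinuousAt G (-1) := by
    have hopen : IsOpen {s : ℂ | -2 < s.re} := isOpen_lt continuous_const Complex.continuous_re
    have hmem : (-1 : ℂ) ∈ {s : ℂ | -2 < s.re} := by norm_num [Set.mem_setOf_eq]
    exact (key3.differentiableAt (hopen.mem_nhds hmem)).continuousAt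
  have key4 : Tendsto (fun s : ℂ => (s + 1) * (-(s + 1)⁻¹ * G s))
      (nhdsWithin (-1) {(-1)}ᶜ) (nhds (2 * u 0)) := by
    have hlim : Tendsto (fun s : ℂ => -G s) (nhdsWithin (-1) {(-1)}ᶜ) (nhds (2 * u 0)) := by
      have : Tendsto (fun s : ℂ => -G s) (nhds (-1)) (nhds (-G (-1))) := (hGcont.neg).tendsto
      rw [hG1, neg_neg] at this
      exact this.mono_left nhdsWithin_le_nhds
    refine Tendsto.congr' ?_ hlim
    filter_upwards [self_mem_nhdsWithin] with s hs
    have hsne : s + 1 ≠ 0 := by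
      intro h
      apply hs
      have : s = -1 := by linear_combination h
      simp [this]
    have hcalc : (s + 1) * (-(s + 1)⁻¹ * G s) = -(((s+1) * (s+1)⁻¹) * G s) := by ring
    rw [hcalc, mul_inv_cancel₀ hsne, one_mul]
  exact ⟨key1, key2, key3, key4⟩
end

section
/- Let U ⊆ ℝ^n be open, V ⊆ U open, and α : V → U a smooth map with a simple fixed point at x₀ ∈ V, with V chosen so small that ψ(x) = x − α(x) is a diffeomorphism of V onto its image. If a ∈ C_c^∞(U) (a symbol of order zero independent of ξ) and A is the operator of multiplication by a (with kernel K_A(x,y) = a(x)δ(x−y)), then the pullback of K_A to the graph of α, i.e. the distribution v ↦ ∫∫ e^{i(α(x)−x)·ξ} a(α(x)) v(x) đξ dx on V, equals (a(x₀) / |det(1 − dα(x₀))|) · δ_{x₀}. -/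
open MeasureTheory Complex

open scoped ContDiff FourierTransform RealInnerProductSpace

lemma aux_contDiff_det (n : ℕ) :
    ContDiff ℝ ∞ (fun T : (Fin n → ℝ) →L[ℝ] (Fin n → ℝ) =>
      LinearMap.det (T : (Fin n → ℝ) →ₗ[ℝ] (Fin n → ℝ))) := by
  classical
  have h : ∀ T : (Fin n → ℝ) →L[ℝ] (Fin n → ℝ),
      LinearMap.det (T : (Fin n → ℝ) →ₗ[ℝ] (Fin n → ℝ)) =
      ∑ σ : Equiv.Perm (Fin n), ((Equiv.Perm.sign σ : ℤ) : ℝ) *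
        ∏ i, T (fun j' => if j' = i then 1 else 0) (σ i) := by
    intro T
    rw [← LinearMap.det_toMatrix', Matrix.det_apply']
    congr 1
    ext σ
    congr 1
    refine Finset.prod_congr rfl fun i _ => ?_
    rw [LinearMap.toMatrix'_apply]
    rw [show (Pi.single i 1 : Fin n → ℝ) = fun j' => if j' = i then 1 else 0 from
      funext fun j => Pi.single_apply i 1 j]
    rfl
  simp only [h]
  apply ContDiff.sum
  intro σ _
  apply ContDiff.mul contDiff_const
  apply contDiff_prod
  intro i _
  exact (((ContinuousLinearMap.proj (σ i)).comp
    (ContinuousLinearMap.apply ℝ (Fin n → ℝ)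
      ((fun j' => if j' = i then 1 else 0 : Fin n → ℝ))))).contDiff

/-- A compactly supported smooth function as a Schwartz map. -/
noncomputable def auxSch {n : ℕ} (W : EuclideanSpace ℝ (Fin n) → ℂ) (hWs : ContDiff ℝ ∞ W)
    (hWsupp : HasCompactSupport W) : SchwartzMap (EuclideanSpace ℝ (Fin n)) ℂ where
  toFun := W
  smooth' := hWs
  decay' := by
    intro k m
    have hsupp : HasCompactSupport (fun x => ‖x‖ ^ k * ‖iteratedFDeriv ℝ m W x‖) := by
      have h1 : HasCompactSupport (fun x => ‖iteratedFDeriv ℝ m W x‖) :=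
        (hWsupp.iteratedFDeriv m).norm
      exact h1.mul_left
    have hcont : Continuous (fun x : EuclideanSpace ℝ (Fin n) =>
        ‖x‖ ^ k * ‖iteratedFDeriv ℝ m W x‖) :=
      ((continuous_norm).pow k).mul
        ((hWs.continuous_iteratedFDeriv (by exact_mod_cast le_top)).norm)
    obtain ⟨C, hC⟩ := hcont.bounded_above_of_compact_support hsupp
    exact ⟨C, fun x => (le_abs_self _).trans ((Real.norm_eq_abs _ ▸ hC x))⟩

/-- Fourier inversion in the concrete form needed for the main theorem. -/
lemma aux_fourier_inversion {n : ℕ} (w : (Fin n → ℝ) → ℂ)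
    (hws : ContDiff ℝ ∞ w) (hwsupp : HasCompactSupport w) :
    (((2 * Real.pi : ℝ) : ℂ) ^ n)⁻¹ *
        ∫ ξ : Fin n → ℝ, ∫ y : Fin n → ℝ,
          Complex.exp (-Complex.I * ((∑ i, y i * ξ i : ℝ) : ℂ)) * w y = w 0 := by
  classical
  set E := EuclideanSpace ℝ (Fin n)
  set φ : E ≃ᵐ (Fin n → ℝ) := (MeasurableEquiv.toLp 2 (Fin n → ℝ)).symm
  have hφ : MeasurePreserving φ volume volume :=
    EuclideanSpace.volume_preserving_symm_measurableEquiv_toLp (Fin n)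
  set W : E → ℂ := fun yE => w (φ yE) with hWdef
  have hWs : ContDiff ℝ ∞ W := hws.comp (EuclideanSpace.equiv (Fin n) ℝ).contDiff
  have hWsupp : HasCompactSupport W :=
    hwsupp.comp_homeomorph (EuclideanSpace.equiv (Fin n) ℝ).toHomeomorph
  have hWint : Integrable W := hWs.continuous.integrable_of_hasCompactSupport hWsupp
  set S : SchwartzMap E ℂ := auxSch W hWs hWsupp with hSdef
  have hFint : Integrable (𝓕 W) := by
    have h1 : Integrable (SchwartzMap.fourierTransformCLM ℝ S) :=
      (SchwartzMap.fourierTransformCLM ℝ S).integrable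
    exact h1
  have hπ : (2 * Real.pi) ≠ 0 := by positivity
  have inner_eq : ∀ ξ : Fin n → ℝ,
      (∫ y : Fin n → ℝ, Complex.exp (-Complex.I * ((∑ i, y i * ξ i : ℝ) : ℂ)) * w y) =
      𝓕 W ((2 * Real.pi)⁻¹ • φ.symm ξ) := by
    intro ξ
    rw [Real.fourier_eq']
    rw [← hφ.integral_comp φ.measurableEmbedding]
    congr 1
    ext yE
    have hsum : (inner ℝ yE (φ.symm ξ) : ℝ) = (∑ i, (φ yE) i * ξ i : ℝ) := by
      rw [PiLp.inner_apply]
      simp only [RCLike.inner_apply, conj_trivial]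
      exact Finset.sum_congr rfl fun i _ => mul_comm _ _
    rw [real_inner_smul_right, hsum, smul_eq_mul]
    congr 1
    have hr : -2 * Real.pi * ((2 * Real.pi)⁻¹ * (∑ i, (φ yE) i * ξ i)) =
        -(∑ i, (φ yE) i * ξ i) := by
      field_simp
    rw [hr]
    push_cast
    ring
  simp only [inner_eq]
  have houter : (∫ ξ : Fin n → ℝ, 𝓕 W ((2 * Real.pi)⁻¹ • φ.symm ξ)) =
      ((2 * Real.pi) ^ n : ℝ) • ∫ ηE : EuclideanSpace ℝ (Fin n), 𝓕 W ηE := by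
    rw [← hφ.integral_comp φ.measurableEmbedding]
    simp only [MeasurableEquiv.symm_apply_apply]
    rw [Measure.integral_comp_inv_smul_of_nonneg volume (𝓕 W)
      (by positivity : (0:ℝ) ≤ 2 * Real.pi)]
    rw [finrank_euclideanSpace_fin]
  rw [houter]
  have hinv0 : (∫ ηE : EuclideanSpace ℝ (Fin n), 𝓕 W ηE) = W 0 := by
    have h1 := hWint.fourierInv_fourier_eq (v := (0 : EuclideanSpace ℝ (Fin n))) hFint
      (hWs.continuous.continuousAt)
    rw [← h1, Real.fourierInv_eq]
    simp
    rfl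
  rw [hinv0]
  have hW0 : W 0 = w 0 := rfl
  rw [hW0, Complex.real_smul]
  have hne : ((2 * Real.pi : ℝ) : ℂ) ^ n ≠ 0 := by
    apply pow_ne_zero
    exact_mod_cast hπ
  push_cast
  field_simp

/-- Let `U ⊆ ℝⁿ` be open, `V ⊆ U` open, and `α : V → U` smooth with a simple
fixed point `x₀` which is its only fixed point in `V`, `V` being so small that
`ψ(x) = x - α(x)` is a diffeomorphism of `V` onto its image. For `a ∈ C_c^∞(U)` (symbol of
order zero) with associated multiplication operator `A` (kernel `a(x)δ(x-y)`), the pullback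
of `K_A` to the graph of `α`, i.e. the distribution
`v ↦ ∫∫ e^{i(α(x)-x)·ξ} a(α(x)) v(x) đξ dx`, interpreted via the substitution `y = x - α(x)`
(with `w(y) = a(α(x(y))) v(x(y)) / |det(1-dα(x(y)))|`, extended by `0` outside `ψ(V)`) and
Fourier inversion, equals `(a(x₀)/|det(1-dα(x₀))|) · δ_{x₀}` evaluated on `v`. -/
theorem pullback_kernel_eq_weighted_delta
    (n : ℕ) (U V : Set (Fin n → ℝ)) (hU : IsOpen U) (hV : IsOpen V) (hVU : V ⊆ U)
    (α : (Fin n → ℝ) → (Fin n → ℝ)) (hα : ContDiffOn ℝ (⊤ : ℕ∞) α V) (hmaps : Set.MapsTo α V U)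
    (x₀ : Fin n → ℝ) (hx₀ : x₀ ∈ V) (hfix : α x₀ = x₀)
    (hsimple : LinearMap.det ((ContinuousLinearMap.id ℝ (Fin n → ℝ)) -
        fderiv ℝ α x₀).toLinearMap ≠ 0)
    (honly : ∀ x ∈ V, α x = x → x = x₀)
    (ψinv : (Fin n → ℝ) → (Fin n → ℝ))
    (hψinv : ∀ x ∈ V, ψinv (x - α x) = x)
    (hψinv_smooth : ContDiffOn ℝ (⊤ : ℕ∞) ψinv ((fun x => x - α x) '' V))
    (a v : (Fin n → ℝ) → ℂ)
    (ha : ContDiff ℝ (⊤ : ℕ∞) a) (ha_supp : HasCompactSupport a) (ha_sub : tsupport a ⊆ U)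
    (hv : ContDiff ℝ (⊤ : ℕ∞) v) (hv_supp : HasCompactSupport v) (hv_sub : tsupport v ⊆ V)
    (w : (Fin n → ℝ) → ℂ)
    (hw : ∀ x ∈ V, w (x - α x) = a (α x) * v x /
        ((|LinearMap.det ((ContinuousLinearMap.id ℝ (Fin n → ℝ)) -
            fderiv ℝ α x).toLinearMap| : ℝ) : ℂ))
    (hw0 : ∀ y ∉ (fun x => x - α x) '' V, w y = 0) :
    (((2 * Real.pi : ℝ) : ℂ) ^ n)⁻¹ *
        ∫ ξ : Fin n → ℝ, ∫ y : Fin n → ℝ,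
          Complex.exp (-Complex.I * ((∑ i, y i * ξ i : ℝ) : ℂ)) * w y =
      a x₀ * v x₀ /
        ((|LinearMap.det ((ContinuousLinearMap.id ℝ (Fin n → ℝ)) -
            fderiv ℝ α x₀).toLinearMap| : ℝ) : ℂ) := by
  classical
  set ψ : (Fin n → ℝ) → (Fin n → ℝ) := fun x => x - α x with hψdef
  set d : (Fin n → ℝ) → ℝ := fun x =>
    LinearMap.det ((ContinuousLinearMap.id ℝ (Fin n → ℝ)) - fderiv ℝ α x).toLinearMap with hddef
  -- basic smoothness facts
  have hαAt : ∀ x ∈ V, ContDiffAt ℝ ∞ α x :=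
    fun x hx => ((hα.of_le (by simp)) x hx).contDiffAt (hV.mem_nhds hx)
  have hψD : ∀ x ∈ V, HasFDerivAt ψ
      ((ContinuousLinearMap.id ℝ (Fin n → ℝ)) - fderiv ℝ α x) x := by
    intro x hx
    exact (hasFDerivAt_id x).sub
      (((hαAt x hx).differentiableAt (by simp)).hasFDerivAt)
  have hψAt : ∀ x ∈ V, ContDiffAt ℝ ∞ ψ x :=
    fun x hx => contDiffAt_id.sub (hαAt x hx)
  -- the key composition identity
  have key : ∀ x ∈ V,
      (fderivWithin ℝ ψinv (ψ '' V) (ψ x)).comp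
        ((ContinuousLinearMap.id ℝ (Fin n → ℝ)) - fderiv ℝ α x) =
        ContinuousLinearMap.id ℝ (Fin n → ℝ) := by
    intro x hx
    have hy : ψ x ∈ ψ '' V := Set.mem_image_of_mem _ hx
    have hA : HasFDerivWithinAt ψinv (fderivWithin ℝ ψinv (ψ '' V) (ψ x)) (ψ '' V) (ψ x) :=
      (((hψinv_smooth.of_le (by simp)) (ψ x) hy).differentiableWithinAt
        (by simp : (∞ : WithTop ℕ∞) ≠ 0)).hasFDerivWithinAt
    have hB := hψD x hx
    have hcomp := hA.comp x hB.hasFDerivWithinAt (Set.mapsTo_image ψ V)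
    have hid : HasFDerivWithinAt id
        ((fderivWithin ℝ ψinv (ψ '' V) (ψ x)).comp
          ((ContinuousLinearMap.id ℝ (Fin n → ℝ)) - fderiv ℝ α x)) V x :=
      hcomp.congr (fun x' hx' => (hψinv x' hx').symm) (hψinv x hx).symm
    exact (hV.uniqueDiffWithinAt hx).eq hid (hasFDerivWithinAt_id x V)
  -- determinant is nonzero on V
  have hdet : ∀ x ∈ V, d x ≠ 0 := by
    intro x hx h0
    have h1 : LinearMap.det ((fderivWithin ℝ ψinv (ψ '' V) (ψ x)).toLinearMap) * d x = 1 := by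
      rw [hddef]
      rw [← LinearMap.det_comp]
      have h2 : (fderivWithin ℝ ψinv (ψ '' V) (ψ x)).toLinearMap.comp
          ((ContinuousLinearMap.id ℝ (Fin n → ℝ)) - fderiv ℝ α x).toLinearMap =
          (((fderivWithin ℝ ψinv (ψ '' V) (ψ x)).comp
            ((ContinuousLinearMap.id ℝ (Fin n → ℝ)) - fderiv ℝ α x)) :
            (Fin n → ℝ) →ₗ[ℝ] (Fin n → ℝ)) := rfl
      rw [h2, key x hx]
      simp
    rw [h0, mul_zero] at h1
    exact zero_ne_one h1
  -- the image ψ '' V is open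
  have himg_open : IsOpen (ψ '' V) := by
    rw [isOpen_iff_mem_nhds]
    rintro y ⟨x, hx, rfl⟩
    set B := (ContinuousLinearMap.id ℝ (Fin n → ℝ)) - fderiv ℝ α x with hBdef
    have hinj : Function.Injective B := by
      intro u u' hu
      have h1 : (fderivWithin ℝ ψinv (ψ '' V) (ψ x)).comp B u =
          (fderivWithin ℝ ψinv (ψ '' V) (ψ x)).comp B u' := by
        simp only [ContinuousLinearMap.comp_apply, hu]
      rw [key x hx] at h1
      simpa using h1
    have hbij : Function.Bijective B.toLinearMap :=
      ⟨hinj, (LinearMap.injective_iff_surjective).mp hinj⟩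
    let e : (Fin n → ℝ) ≃ₗ[ℝ] (Fin n → ℝ) := LinearEquiv.ofBijective B.toLinearMap hbij
    let eC : (Fin n → ℝ) ≃L[ℝ] (Fin n → ℝ) := e.toContinuousLinearEquiv
    have hstrict : HasStrictFDerivAt ψ B x := by
      have h2 : HasStrictFDerivAt ψ (fderiv ℝ ψ x) x :=
        (hψAt x hx).hasStrictFDerivAt (by simp)
      rwa [(hψD x hx).fderiv] at h2
    have hcoe : (eC : (Fin n → ℝ) →L[ℝ] (Fin n → ℝ)) = B := by
      ext u j
      have := congrFun (e.coe_toContinuousLinearEquiv') u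
      exact congrFun this j
    have hmap : Filter.map ψ (nhds x) = nhds (ψ x) := by
      rw [← hcoe] at hstrict
      exact hstrict.map_nhds_eq_of_equiv
    rw [← hmap]
    exact Filter.image_mem_map (hV.mem_nhds hx)
  -- smoothness of d on V
  have hdAt : ∀ x ∈ V, ContDiffAt ℝ ∞ d x := by
    intro x hx
    have hfd : ContDiffAt ℝ ∞ (fderiv ℝ α) x :=
      ((hα x hx).contDiffAt (hV.mem_nhds hx)).fderiv_right (by simp)
    have hD : ContDiffAt ℝ ∞
        (fun x => (ContinuousLinearMap.id ℝ (Fin n → ℝ)) - fderiv ℝ α x) x :=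
      contDiffAt_const.sub hfd
    exact ((aux_contDiff_det n).contDiffAt).comp x hD
  -- support of w
  set K := tsupport v with hKdef
  have hKc : IsCompact K := hv_supp
  have hψVcont : ContinuousOn ψ V := fun x hx => (hψAt x hx).continuousAt.continuousWithinAt
  have hsupp_w : Function.support w ⊆ ψ '' K := by
    intro y hy
    by_cases hyV : y ∈ ψ '' V
    · obtain ⟨x, hx, rfl⟩ := hyV
      by_cases hxK : x ∈ K
      · exact Set.mem_image_of_mem _ hxK
      · exfalso
        apply hy
        rw [hw x hx, image_eq_zero_of_notMem_tsupport hxK, mul_zero, zero_div]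
    · exact absurd (hw0 y hyV) hy
  have hψKc : IsCompact (ψ '' K) := hKc.image_of_continuousOn (hψVcont.mono hv_sub)
  have hwsupp : HasCompactSupport w :=
    HasCompactSupport.of_support_subset_isCompact hψKc hsupp_w
  -- smoothness of w
  have hwsmooth : ContDiff ℝ ∞ w := by
    rw [contDiff_iff_contDiffAt]
    intro y
    by_cases hy : y ∈ ψ '' V
    · have hyo : ψ '' V ∈ nhds y := himg_open.mem_nhds hy
      have hxmem : ψinv y ∈ V := by
        obtain ⟨x, hx, rfl⟩ := hy
        rw [hψinv x hx]; exact hx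
      have hinvAt : ContDiffAt ℝ ∞ ψinv y :=
        ((hψinv_smooth.of_le (by simp)) y hy).contDiffAt hyo
      have hEv : ∀ᶠ y' in nhds y, w y' =
          a (α (ψinv y')) * v (ψinv y') * (((|d (ψinv y')| : ℝ) : ℂ))⁻¹ := by
        filter_upwards [hyo] with y' hy'
        obtain ⟨x', hx', rfl⟩ := hy'
        rw [hψinv x' hx', hw x' hx', div_eq_mul_inv]
      have hdx : d (ψinv y) ≠ 0 := hdet _ hxmem
      have hdAty : ContDiffAt ℝ ∞ (fun y' => d (ψinv y')) y :=
        (hdAt _ hxmem).comp y hinvAt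
      have hcont : ContinuousAt (fun y' => d (ψinv y')) y := hdAty.continuousAt
      -- eventual sign of d ∘ ψinv
      set c : ℝ := if 0 < d (ψinv y) then 1 else -1 with hcdef
      have hsign : ∀ᶠ y' in nhds y, |d (ψinv y')| = c * d (ψinv y') := by
        rcases hdx.lt_or_gt with hneg | hpos
        · have h1 : ∀ᶠ y' in nhds y, d (ψinv y') < 0 := hcont (Iio_mem_nhds hneg)
          filter_upwards [h1] with y' h1'
          rw [abs_of_neg h1', hcdef, if_neg (by linarith), neg_one_mul]
        · have h1 : ∀ᶠ y' in nhds y, 0 < d (ψinv y') := hcont (Ioi_mem_nhds hpos)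
          filter_upwards [h1] with y' h1'
          rw [abs_of_pos h1', hcdef, if_pos hpos, one_mul]
      have hden : ContDiffAt ℝ ∞ (fun y' => ((|d (ψinv y')| : ℝ) : ℂ)) y := by
        have h1 : ContDiffAt ℝ ∞ (fun y' => ((c * d (ψinv y') : ℝ) : ℂ)) y :=
          (Complex.ofRealCLM.contDiff.contDiffAt).comp y (contDiffAt_const.mul hdAty)
        apply h1.congr_of_eventuallyEq
        filter_upwards [hsign] with y' hs
        rw [hs]
      have hnum : ContDiffAt ℝ ∞ (fun y' => a (α (ψinv y')) * v (ψinv y')) y := by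
        have h1 : ContDiffAt ℝ ∞ (fun y' => a (α (ψinv y'))) y :=
          ((ha.of_le (by simp)).contDiffAt).comp y (((hαAt _ hxmem).comp y hinvAt))
        have h2 : ContDiffAt ℝ ∞ (fun y' => v (ψinv y')) y :=
          ((hv.of_le (by simp)).contDiffAt).comp y hinvAt
        exact h1.mul h2
      have hF : ContDiffAt ℝ ∞
          (fun y' => a (α (ψinv y')) * v (ψinv y') * (((|d (ψinv y')| : ℝ) : ℂ))⁻¹) y :=
        hnum.mul (hden.inv (by simpa using hdx))
      exact hF.congr_of_eventuallyEq hEv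
    · have hyK : y ∉ ψ '' K := fun h => hy (Set.image_mono hv_sub h)
      have hEv : ∀ᶠ y' in nhds y, w y' = 0 := by
        filter_upwards [hψKc.isClosed.isOpen_compl.mem_nhds hyK] with y' hy'
        by_contra hne
        exact hy' (hsupp_w hne)
      exact contDiffAt_const.congr_of_eventuallyEq hEv
  -- conclude by Fourier inversion
  rw [aux_fourier_inversion w hwsmooth hwsupp]
  have h0 : w 0 = a x₀ * v x₀ /
      ((|LinearMap.det ((ContinuousLinearMap.id ℝ (Fin n → ℝ)) -
          fderiv ℝ α x₀).toLinearMap| : ℝ) : ℂ) := by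
    have := hw x₀ hx₀
    rw [hfix, sub_self] at this
    exact this
  exact h0
end
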